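/- Inversion symmetry of Painlevé-III: let D ⊆ ℂ be open with 0 ∉ D, and let u : D → ℂ be analytic, nonvanishing on D, and satisfy the generic Painlevé-III equation with parameters (Θ₀, Θ∞) on D. Then the function x ↦ 1/u(x) satisfies the generic Painlevé-III equation with parameters (Θ∞ − 1, Θ₀ + 1) on D. -/

import Mathlib

open Complex Filter

/-- The generic Painlevé-III equation with parameters `(Θ0, Θinf)` holds for the
function `u` at the point `x`. -/
def PIIIat (Θ0 Θinf : ℂ) (u : ℂ → ℂ) (x : ℂ) : Prop :=
  deriv (deriv u) x =
    (deriv u x) ^ 2 / u x - deriv u x / x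
      + (4 * Θ0 * (u x) ^ 2 + 4 * (1 - Θinf)) / x
      + 4 * (u x) ^ 3 - 4 / u x

/-- Inversion symmetry of Painlevé-III: if `u` solves PIII with parameters
`(Θ0, Θinf)` on `D`, then `1/u` solves PIII with parameters `(Θinf - 1, Θ0 + 1)`
on `D`. -/
lemma painleveIII_inv_alg (a b x Θ0 Θinf : ℂ) (ha : a ≠ 0) (hx : x ≠ 0) :
    (-(b^2/a - b/x + (4*Θ0*a^2+4*(1-Θinf))/x + 4*a^3 - 4/a) * a^2 - (-b)*(2*a*b)) / (a^2)^2
    = (-b/a^2)^2/(1/a) - (-b/a^2)/x + (4*(Θinf-1)*(1/a)^2 + 4*(1-(Θ0+1)))/x + 4*(1/a)^3 - 4/(1/a) := by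
  have hax : a^3 * x ≠ 0 := mul_ne_zero (pow_ne_zero 3 ha) hx
  have h1 : (-b/a^2)^2/(1/a) = (b^2*x)/(a^3*x) := by
    rw [one_div, div_inv_eq_mul]; field_simp
  have h2 : (-b/a^2)/x = (-(a*b))/(a^3*x) := by
    rw [div_div, div_eq_div_iff (mul_ne_zero (pow_ne_zero 2 ha) hx) hax]; ring
  have h3 : (4*(Θinf-1)*(1/a)^2 + 4*(1-(Θ0+1)))/x
      = (4*(Θinf-1)*a - 4*Θ0*a^3)/(a^3*x) := by
    rw [div_eq_div_iff hx hax]; field_simp; ring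
  have h4 : (4:ℂ)*(1/a)^3 = (4*x)/(a^3*x) := by field_simp
  have h5 : (4:ℂ)/(1/a) = (4*a^4*x)/(a^3*x) := by
    rw [one_div, div_inv_eq_mul, eq_div_iff hax]; ring
  rw [h1, h2, h3, h4, h5, div_sub_div_same, ← add_div, ← add_div,
    div_sub_div_same, div_eq_div_iff (pow_ne_zero 2 (pow_ne_zero 2 ha)) hax]
  field_simp
  ring

theorem painleveIII_inversion_symmetry (D : Set ℂ) (hD : IsOpen D) (h0 : (0 : ℂ) ∉ D)
    (Θ0 Θinf : ℂ) (u : ℂ → ℂ)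
    (hana : ∀ x ∈ D, AnalyticAt ℂ u x)
    (hnz : ∀ x ∈ D, u x ≠ 0)
    (hsol : ∀ x ∈ D, PIIIat Θ0 Θinf u x) :
    ∀ x ∈ D, PIIIat (Θinf - 1) (Θ0 + 1) (fun y => 1 / u y) x := by
  intro x hx
  have hxne : x ≠ 0 := fun h => h0 (h ▸ hx)
  have hDmem : ∀ᶠ y in nhds x, y ∈ D := hD.mem_nhds hx
  have hux : u x ≠ 0 := hnz x hx
  have hu' : AnalyticAt ℂ (deriv u) x := (AnalyticOnNhd.deriv hana) x hx
  have hd1 : ∀ᶠ y in nhds x, deriv (fun z => 1 / u z) y = -deriv u y / (u y) ^ 2 := by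
    filter_upwards [hDmem] with y hy
    have hdy : DifferentiableAt ℂ u y := (hana y hy).differentiableAt
    have hny := hnz y hy
    simp only [one_div]
    exact deriv_inv'' hdy hny
  have hd1x : deriv (fun z => 1 / u z) x = -deriv u x / (u x) ^ 2 := hd1.self_of_nhds
  have h2 : deriv (deriv (fun z => 1 / u z)) x = deriv (fun y => -deriv u y / (u y) ^ 2) x :=
    Filter.EventuallyEq.deriv_eq hd1
  have hdu : HasDerivAt u (deriv u x) x := (hana x hx).differentiableAt.hasDerivAt
  have hddu : HasDerivAt (deriv u) (deriv (deriv u) x) x := hu'.differentiableAt.hasDerivAt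
  have hnum : HasDerivAt (fun y => -deriv u y) (-deriv (deriv u) x) x := hddu.neg
  have hden : HasDerivAt (fun y => (u y) ^ 2) ((2 : ℕ) * u x ^ 1 * deriv u x) x := hdu.pow 2
  have hden2 : ((u x) ^ 2 : ℂ) ≠ 0 := pow_ne_zero 2 hux
  have hdivd := hnum.div hden hden2
  have h3 : deriv (fun y => -deriv u y / (u y) ^ 2) x =
      (-deriv (deriv u) x * u x ^ 2 - (-deriv u x) * ((2 : ℕ) * u x ^ 1 * deriv u x)) / (u x ^ 2) ^ 2 :=
    hdivd.deriv
  have hsx := hsol x hx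
  unfold PIIIat at hsx ⊢
  rw [h2, h3, hsx]
  simp only [hd1x, pow_one, Nat.cast_ofNat]
  exact painleveIII_inv_alg (u x) (deriv u x) x Θ0 Θinf hux hxne
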